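/- arXiv:2507.08883 — 3 statements merged into one kernel-verified Lean document; each statement's English description precedes it below -/
import Mathlib

section
/- Let ζ ∈ ℂ, let Λ and g be complex-analytic functions on a neighborhood of ζ with g(ζ) = 0, g'(ζ) ≠ 0 and Λ'(ζ) ≠ 0, and let h be analytic on a neighborhood of Λ(ζ). Let k be a natural number and let h̃ be an analytic function on a neighborhood of ζ that agrees, for t ≠ ζ near ζ, with h̃(t) = h(Λ(t)) · g(t)^{k+1}/(Λ(t) − Λ(ζ))^{k+1} · Λ'(t)/g'(t). Then h^{(k)}(Λ(ζ)) = ((D_g)^k h̃)(ζ), where D_g denotes the operator (D_g u)(t) = u'(t)/g'(t) and (D_g)^k is its k-fold iterate. -/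
/-!
Near `ζ` write `g = q · (Λ - Λ ζ)` with `q` analytic, so that `h̃ = W_k[h] := h(Λ) · q^{k+1} · D_g Λ`.
Differentiating `g = q · (Λ - Λ ζ)` gives `g · D_g q = q - q² · D_g Λ`, and hence, with
`A = h(Λ) · q^{k+1}`, the identity `(k+1) (W_{k+1}[h] - A) = g · (W_k[h'] - D_g A)`.
Since `D_g g = 1`, we have `(D_g)^{n+1} (g V) = g (D_g)^{n+1} V + (n+1) (D_g)^n V`, which at the zero `ζ`
of `g` leaves only the second term. Applying `(D_g)^{k+1}` at `ζ`, the `A`-terms cancel and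
`(D_g)^{k+1} W_{k+1}[h] (ζ) = (D_g)^k W_k[h'] (ζ)`, so the formula follows by induction on `k`,
applied to `h'`.
-/

open Complex Filter

/-- The weighted differentiation operator `D_g`: `(D_g u)(t) = u'(t) / g'(t)`. -/
noncomputable def Dg (g u : ℂ → ℂ) : ℂ → ℂ := fun t => deriv u t / deriv g t

open Topology

section WeightedDerivative

variable {g u v : ℂ → ℂ} {z : ℂ}

theorem analyticAt_Dg (hg : AnalyticAt ℂ g z) (hg' : deriv g z ≠ 0) (hu : AnalyticAt ℂ u z) :
    AnalyticAt ℂ (Dg g u) z :=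
  hu.deriv.div hg.deriv hg'

theorem analyticAt_iterate_Dg (hg : AnalyticAt ℂ g z) (hg' : deriv g z ≠ 0)
    (hu : AnalyticAt ℂ u z) (n : ℕ) : AnalyticAt ℂ ((Dg g)^[n] u) z := by
  induction n with
  | zero => exact hu
  | succ n ih => simpa only [Function.iterate_succ_apply'] using analyticAt_Dg hg hg' ih

theorem Dg_congr (h : u =ᶠ[𝓝 z] v) : Dg g u =ᶠ[𝓝 z] Dg g v :=
  h.deriv.mono fun t ht => by simp only [Dg, ht]

theorem iterate_Dg_congr (h : u =ᶠ[𝓝 z] v) (n : ℕ) : (Dg g)^[n] u =ᶠ[𝓝 z] (Dg g)^[n] v := by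
  induction n with
  | zero => exact h
  | succ n ih => simpa only [Function.iterate_succ_apply'] using Dg_congr ih

theorem Dg_add_const_mul (hu : AnalyticAt ℂ u z) (hv : AnalyticAt ℂ v z) (c : ℂ) :
    Dg g (fun t => u t + c * v t) =ᶠ[𝓝 z] fun t => Dg g u t + c * Dg g v t := by
  filter_upwards [hu.eventually_analyticAt, hv.eventually_analyticAt] with t hut hvt
  simp only [Dg, deriv_fun_add hut.differentiableAt (hvt.differentiableAt.const_mul c),
    deriv_const_mul c hvt.differentiableAt]
  ring

theorem iterate_Dg_add_const_mul (hg : AnalyticAt ℂ g z) (hg' : deriv g z ≠ 0)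
    (hu : AnalyticAt ℂ u z) (hv : AnalyticAt ℂ v z) (c : ℂ) (n : ℕ) :
    (Dg g)^[n] (fun t => u t + c * v t) =ᶠ[𝓝 z]
      fun t => (Dg g)^[n] u t + c * (Dg g)^[n] v t := by
  induction n generalizing u v with
  | zero => rfl
  | succ n ih =>
    simp only [Function.iterate_succ_apply]
    exact (iterate_Dg_congr (Dg_add_const_mul hu hv c) n).trans
      (ih (analyticAt_Dg hg hg' hu) (analyticAt_Dg hg hg' hv))

theorem iterate_Dg_sub (hg : AnalyticAt ℂ g z) (hg' : deriv g z ≠ 0)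
    (hu : AnalyticAt ℂ u z) (hv : AnalyticAt ℂ v z) (n : ℕ) :
    (Dg g)^[n] (fun t => u t - v t) =ᶠ[𝓝 z] fun t => (Dg g)^[n] u t - (Dg g)^[n] v t := by
  simpa only [neg_one_mul, ← sub_eq_add_neg] using iterate_Dg_add_const_mul hg hg' hu hv (-1) n

theorem Dg_mul_self (hg : AnalyticAt ℂ g z) (hg' : deriv g z ≠ 0) (hu : AnalyticAt ℂ u z) :
    Dg g (fun t => g t * u t) =ᶠ[𝓝 z] fun t => u t + g t * Dg g u t := by
  filter_upwards [hg.eventually_analyticAt, hu.eventually_analyticAt,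
    hg.deriv.continuousAt.eventually_ne hg'] with t hgt hut hg't
  simp only [Dg, deriv_fun_mul hgt.differentiableAt hut.differentiableAt]
  field_simp

theorem iterate_Dg_mul_self (hg : AnalyticAt ℂ g z) (hg' : deriv g z ≠ 0)
    (hu : AnalyticAt ℂ u z) (n : ℕ) :
    (Dg g)^[n + 1] (fun t => g t * u t) =ᶠ[𝓝 z]
      fun t => g t * (Dg g)^[n + 1] u t + (n + 1) * (Dg g)^[n] u t := by
  induction n with
  | zero =>
    filter_upwards [Dg_mul_self hg hg' hu] with t ht
    simp only [zero_add, Function.iterate_one, Function.iterate_zero_apply, ht]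
    ring
  | succ n ih =>
    have hDu := analyticAt_iterate_Dg hg hg' hu
    have hgDu : AnalyticAt ℂ (fun t => g t * (Dg g)^[n + 1] u t) z := hg.mul (hDu (n + 1))
    filter_upwards [Dg_congr ih, Dg_add_const_mul hgDu (hDu n) (n + 1),
      Dg_mul_self hg hg' (hDu (n + 1))] with t h₁ h₂ h₃
    rw [Function.iterate_succ_apply', h₁, h₂, h₃, ← Function.iterate_succ_apply' (Dg g) n,
      ← Function.iterate_succ_apply' (Dg g) (n + 1)]
    push_cast
    ring

end WeightedDerivative

theorem analyticAt_dslope {𝕜 E : Type*} [NontriviallyNormedField 𝕜] [NormedAddCommGroup E]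
    [NormedSpace 𝕜 E] {f : 𝕜 → E} {z : 𝕜} (hf : AnalyticAt 𝕜 f z) :
    AnalyticAt 𝕜 (dslope f z) z :=
  let ⟨_, hp⟩ := hf
  hp.has_fpower_series_dslope_fslope.analyticAt

section Kernel

variable {Λ g q : ℂ → ℂ} {ζ : ℂ}

theorem exists_analyticAt_mul_sub_eq (hΛ : AnalyticAt ℂ Λ ζ) (hg : AnalyticAt ℂ g ζ)
    (hgζ : g ζ = 0) (hΛ' : deriv Λ ζ ≠ 0) :
    ∃ q : ℂ → ℂ, AnalyticAt ℂ q ζ ∧ ∀ᶠ t in 𝓝 ζ, q t * (Λ t - Λ ζ) = g t := by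
  have hΛζ : dslope Λ ζ ζ ≠ 0 := by rwa [dslope_same]
  refine ⟨fun t => dslope g ζ t / dslope Λ ζ t,
    (analyticAt_dslope hg).div (analyticAt_dslope hΛ) hΛζ, ?_⟩
  filter_upwards [(analyticAt_dslope hΛ).continuousAt.eventually_ne hΛζ] with t ht
  have hgt := sub_smul_dslope g ζ t
  have hΛt := sub_smul_dslope Λ ζ t
  rw [hgζ, sub_zero, smul_eq_mul] at hgt
  rw [smul_eq_mul] at hΛt
  rw [← hgt, ← hΛt]
  field_simp

theorem deriv_mul_sub_eq (hΛ : AnalyticAt ℂ Λ ζ) (hq : AnalyticAt ℂ q ζ)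
    (hqΛ : ∀ᶠ t in 𝓝 ζ, q t * (Λ t - Λ ζ) = g t) :
    ∀ᶠ t in 𝓝 ζ, deriv q t * (Λ t - Λ ζ) + q t * deriv Λ t = deriv g t := by
  filter_upwards [hqΛ.eventually_nhds, hq.eventually_analyticAt, hΛ.eventually_analyticAt]
    with t ht hqt hΛt
  rw [← Filter.EventuallyEq.deriv_eq ht,
    deriv_fun_mul hqt.differentiableAt (hΛt.differentiableAt.sub_const _), deriv_sub_const]

theorem kernel_succ_eq (hΛ : AnalyticAt ℂ Λ ζ) (hg : AnalyticAt ℂ g ζ) (hg' : deriv g ζ ≠ 0)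
    (hq : AnalyticAt ℂ q ζ) (hqΛ : ∀ᶠ t in 𝓝 ζ, q t * (Λ t - Λ ζ) = g t)
    {h : ℂ → ℂ} (hh : AnalyticAt ℂ h (Λ ζ)) (k : ℕ) :
    (fun t => h (Λ t) * q t ^ (k + 2) * Dg g Λ t) =ᶠ[𝓝 ζ]
      fun t => h (Λ t) * q t ^ (k + 1) + ((k : ℂ) + 1)⁻¹ * (g t *
        (deriv h (Λ t) * q t ^ (k + 1) * Dg g Λ t - Dg g (fun s => h (Λ s) * q s ^ (k + 1)) t)) := by
  filter_upwards [hqΛ, deriv_mul_sub_eq hΛ hq hqΛ, hΛ.eventually_analyticAt,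
    hq.eventually_analyticAt, hΛ.continuousAt.eventually hh.eventually_analyticAt,
    hg.deriv.continuousAt.eventually_ne hg'] with t hqt hq't hΛt hqt' hht hg't
  have hA : HasDerivAt (fun s => h (Λ s) * q s ^ (k + 1))
      (deriv h (Λ t) * deriv Λ t * q t ^ (k + 1) +
        h (Λ t) * ((k + 1 : ℕ) * q t ^ k * deriv q t)) t :=
    (hht.differentiableAt.hasDerivAt.comp t hΛt.differentiableAt.hasDerivAt).mul
      (hqt'.differentiableAt.hasDerivAt.pow (k + 1))
  simp only [Dg, hA.deriv]
  rw [← hqt]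
  push_cast
  field_simp
  linear_combination (h (Λ t) * q t ^ (k + 1) * ((k : ℂ) + 1)) * hq't

theorem iteratedDeriv_eq_iterate_Dg_kernel (hΛ : AnalyticAt ℂ Λ ζ) (hg : AnalyticAt ℂ g ζ)
    (hgζ : g ζ = 0) (hg' : deriv g ζ ≠ 0) (hq : AnalyticAt ℂ q ζ)
    (hqΛ : ∀ᶠ t in 𝓝 ζ, q t * (Λ t - Λ ζ) = g t) (k : ℕ) {h : ℂ → ℂ}
    (hh : AnalyticAt ℂ h (Λ ζ)) :
    iteratedDeriv k h (Λ ζ) = (Dg g)^[k] (fun t => h (Λ t) * q t ^ (k + 1) * Dg g Λ t) ζ := by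
  induction k generalizing h with
  | zero =>
    have hqζ : q ζ * deriv Λ ζ = deriv g ζ := by
      simpa using (deriv_mul_sub_eq hΛ hq hqΛ).self_of_nhds
    simp only [iteratedDeriv_zero, Function.iterate_zero_apply, Dg, zero_add, pow_one]
    field_simp
    rw [mul_assoc, hqζ]
  | succ k ih =>
    set A : ℂ → ℂ := fun t => h (Λ t) * q t ^ (k + 1)
    set G : ℂ → ℂ := fun t => deriv h (Λ t) * q t ^ (k + 1) * Dg g Λ t
    have hA : AnalyticAt ℂ A ζ := (hh.comp hΛ).mul (hq.pow _)
    have hDA : AnalyticAt ℂ (Dg g A) ζ := analyticAt_Dg hg hg' hA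
    have hG : AnalyticAt ℂ G ζ :=
      ((hh.deriv.comp hΛ).mul (hq.pow _)).mul (analyticAt_Dg hg hg' hΛ)
    have hV : AnalyticAt ℂ (fun t => G t - Dg g A t) ζ := hG.sub hDA
    have hGA : AnalyticAt ℂ (fun t => g t * (G t - Dg g A t)) ζ := hg.mul hV
    symm
    calc (Dg g)^[k + 1] (fun t => h (Λ t) * q t ^ (k + 1 + 1) * Dg g Λ t) ζ
        = (Dg g)^[k + 1] (fun t => A t + ((k : ℂ) + 1)⁻¹ * (g t * (G t - Dg g A t))) ζ :=
          (iterate_Dg_congr (kernel_succ_eq hΛ hg hg' hq hqΛ hh k) _).self_of_nhds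
      _ = (Dg g)^[k + 1] A ζ + ((k : ℂ) + 1)⁻¹ *
            (g ζ * (Dg g)^[k + 1] (fun t => G t - Dg g A t) ζ +
              ((k : ℂ) + 1) * (Dg g)^[k] (fun t => G t - Dg g A t) ζ) := by
        rw [(iterate_Dg_add_const_mul hg hg' hA hGA _ _).self_of_nhds]
        beta_reduce
        rw [(iterate_Dg_mul_self hg hg' hV k).self_of_nhds]
      _ = (Dg g)^[k] G ζ := by
        rw [hgζ, (iterate_Dg_sub hg hg' hG hDA k).self_of_nhds, ← Function.iterate_succ_apply]
        field_simp
        ring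
      _ = iteratedDeriv (k + 1) h (Λ ζ) := by rw [iteratedDeriv_succ', ih hh.deriv]

end Kernel

/-- **Lemma 2.1 of the paper.** If `h̃` agrees near `ζ` (off `ζ`) with
`h(Λ t) · g(t)^{k+1}/(Λ t − Λ ζ)^{k+1} · Λ'(t)/g'(t)`, then
`h^{(k)}(Λ ζ) = ((D_g)^k h̃)(ζ)`. -/
theorem derivative_formula_via_weighted_diff
    (ζ : ℂ) (Λ g h htilde : ℂ → ℂ) (k : ℕ)
    (hΛ : AnalyticAt ℂ Λ ζ) (hg : AnalyticAt ℂ g ζ)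
    (hgζ : g ζ = 0) (hg' : deriv g ζ ≠ 0) (hΛ' : deriv Λ ζ ≠ 0)
    (hh : AnalyticAt ℂ h (Λ ζ))
    (hht : AnalyticAt ℂ htilde ζ)
    (hagree : ∀ᶠ t in nhdsWithin ζ {ζ}ᶜ,
      htilde t = h (Λ t) * g t ^ (k + 1) / (Λ t - Λ ζ) ^ (k + 1)
        * (deriv Λ t / deriv g t)) :
    iteratedDeriv k h (Λ ζ) = (Dg g)^[k] htilde ζ := by
  obtain ⟨q, hq, hqΛ⟩ := exists_analyticAt_mul_sub_eq hΛ hg hgζ hΛ'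
  have hΛne : ∀ᶠ t in 𝓝[≠] ζ, Λ t ≠ Λ ζ := hΛ.differentiableAt.hasDerivAt.eventually_ne hΛ'
  have hkernel : htilde =ᶠ[𝓝 ζ] fun t => h (Λ t) * q t ^ (k + 1) * Dg g Λ t := by
    have hW : AnalyticAt ℂ (fun t => h (Λ t) * q t ^ (k + 1) * Dg g Λ t) ζ :=
      ((hh.comp hΛ).mul (hq.pow _)).mul (analyticAt_Dg hg hg' hΛ)
    refine (hht.frequently_eq_iff_eventually_eq hW).mp (Eventually.frequently ?_)
    filter_upwards [hagree, hΛne, nhdsWithin_le_nhds hqΛ] with t ht htne hqt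
    rw [ht, ← hqt, mul_pow, ← mul_assoc,
      mul_div_cancel_right₀ _ (pow_ne_zero _ (sub_ne_zero.2 htne))]
    rfl
  rw [iteratedDeriv_eq_iterate_Dg_kernel hΛ hg hgζ hg' hq hqΛ k hh,
    (iterate_Dg_congr hkernel k).self_of_nhds]
end

section
/- Let ζ ∈ ℂ, let Λ be complex-analytic and injective on a neighborhood of the closed disk of radius r > 0 centered at ζ, with Λ'(ζ) ≠ 0, and let h be analytic on a neighborhood of the image under Λ of that closed disk. Let k be a natural number. Then (1/k!) · h^{(k)}(Λ(ζ)) equals the circle integral (1/(2πi)) ∮_{|t−ζ|=r} h(Λ(t)) · Λ'(t)/(Λ(t) − Λ(ζ))^{k+1} dt, where the circle is traversed once counterclockwise. -/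
/-!
With `q = dslope Λ ζ` we have `Λ t - Λ ζ = (t - ζ) q t`, and `q` is analytic and, by injectivity
and `Λ' ζ ≠ 0`, zero-free on the closed disk. Hence `Λ' / (Λ - Λ ζ) = (t - ζ)⁻¹ (Λ' / q)`, and the
Cauchy integral formula gives `∮ Λ' / (Λ - Λ ζ) = 2πi`. Writing
`h w = h (Λ ζ) + (w - Λ ζ) dslope h (Λ ζ) w` lowers the exponent of `Λ - Λ ζ` by one, at the cost
of the exact derivative `h (Λ ζ) Λ' / (Λ - Λ ζ)ᵐ⁺²`, whose integral vanishes. By induction the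
integral is `2πi` times the `k`-th iterated slope of `h` at `Λ ζ`, which is the `k`-th Taylor
coefficient `h⁽ᵏ⁾(Λ ζ) / k!`.
-/

open Complex Metric Function Real Set

theorem AnalyticAt.dslope {𝕜 E : Type*} [NontriviallyNormedField 𝕜] [NormedAddCommGroup E]
    [NormedSpace 𝕜 E] {f : 𝕜 → E} {a x : 𝕜} (hf : AnalyticAt 𝕜 f x) :
    AnalyticAt 𝕜 (dslope f a) x := by
  rcases eq_or_ne x a with rfl | hxa
  · obtain ⟨p, hp⟩ := hf
    exact hp.has_fpower_series_dslope_fslope.analyticAt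
  · have hslope : AnalyticAt 𝕜 (fun y => (y - a)⁻¹ • (f y - f a)) x :=
      ((analyticAt_id.sub analyticAt_const).inv (sub_ne_zero.2 hxa)).smul (hf.sub analyticAt_const)
    refine hslope.congr ?_
    filter_upwards [eventually_ne_nhds hxa] with y hy
    rw [dslope_of_ne _ hy, slope_def_module]

theorem iterate_dslope_self_eq_iteratedDeriv_div_factorial {𝕜 : Type*} [NontriviallyNormedField 𝕜]
    [CompleteSpace 𝕜] [CharZero 𝕜] {f : 𝕜 → 𝕜} {a : 𝕜} (hf : AnalyticAt 𝕜 f a) (n : ℕ) :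
    (swap dslope a)^[n] f a = iteratedDeriv n f a / n.factorial := by
  rw [← (hf.hasFPowerSeriesAt.has_fpower_series_iterate_dslope_fslope n).coeff_zero 1,
    ← FormalMultilinearSeries.coeff, FormalMultilinearSeries.coeff_iterate_fslope, zero_add,
    FormalMultilinearSeries.coeff_ofScalars]

theorem dslope_ne_zero_of_injOn {𝕜 : Type*} [NontriviallyNormedField 𝕜] {f : 𝕜 → 𝕜} {a b : 𝕜}
    {s : Set 𝕜} (hinj : InjOn f s) (ha : a ∈ s) (hb : b ∈ s) (hf' : deriv f a ≠ 0) :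
    dslope f a b ≠ 0 := by
  rcases eq_or_ne b a with rfl | hba
  · rwa [dslope_same]
  · rw [dslope_of_ne _ hba, slope_def_field]
    exact div_ne_zero (sub_ne_zero.2 fun h => hba (hinj hb ha h)) (sub_ne_zero.2 hba)

section ChangeOfVariable

variable {Λ h : ℂ → ℂ} {ζ c a : ℂ} {r R : ℝ}

theorem circleIntegral_deriv_div_sub_pow_eq_zero (hR : 0 ≤ R)
    (hΛ : ∀ t ∈ sphere c R, DifferentiableAt ℂ Λ t) (ha : ∀ t ∈ sphere c R, Λ t ≠ a) (m : ℕ) :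
    ∮ t in C(c, R), deriv Λ t / (Λ t - a) ^ (m + 2) = 0 := by
  refine circleIntegral.integral_eq_zero_of_hasDerivWithinAt
    (f := fun t => -(m + 1 : ℂ)⁻¹ * ((Λ t - a) ^ (m + 1))⁻¹) hR fun t ht => ?_
  have hD : Λ t - a ≠ 0 := sub_ne_zero.2 (ha t ht)
  refine (((((hΛ t ht).hasDerivAt.sub_const a).pow (m + 1)).inv (pow_ne_zero _ hD)).const_mul
    (-(m + 1 : ℂ)⁻¹)).hasDerivWithinAt.congr_deriv ?_
  simp only [Pi.pow_apply, Nat.add_sub_cancel]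
  push_cast
  field_simp
  ring

theorem circleIntegral_deriv_div_sub_self (hr : 0 < r)
    (hΛ : AnalyticOnNhd ℂ Λ (closedBall ζ r)) (hinj : InjOn Λ (closedBall ζ r))
    (hΛ' : deriv Λ ζ ≠ 0) :
    ∮ t in C(ζ, r), deriv Λ t / (Λ t - Λ ζ) = 2 * π * I := by
  have hζ : ζ ∈ closedBall ζ r := mem_closedBall_self hr.le
  have hF : DifferentiableOn ℂ (fun t => deriv Λ t / dslope Λ ζ t) (closedBall ζ r) := fun t ht =>
    ((hΛ t ht).deriv.div (hΛ t ht).dslope (dslope_ne_zero_of_injOn hinj hζ ht hΛ'))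
      |>.differentiableAt.differentiableWithinAt
  have hkernel : EqOn (fun t => deriv Λ t / (Λ t - Λ ζ))
      (fun t => (t - ζ)⁻¹ • (deriv Λ t / dslope Λ ζ t)) (sphere ζ r) := fun t ht => by
    dsimp only
    rw [← sub_smul_dslope Λ ζ t, smul_eq_mul, smul_eq_mul]
    field_simp
  rw [circleIntegral.integral_congr hr.le hkernel,
    hF.circleIntegral_sub_inv_smul (mem_ball_self hr), dslope_same, div_self hΛ', smul_eq_mul,
    mul_one]

theorem circleIntegral_comp_mul_deriv_div_sub_pow_succ (hR : 0 ≤ R)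
    (hΛ : AnalyticOnNhd ℂ Λ (sphere c R)) (ha : ∀ t ∈ sphere c R, Λ t ≠ a)
    (hh : AnalyticOnNhd ℂ h (Λ '' sphere c R)) (m : ℕ) :
    ∮ t in C(c, R), h (Λ t) * deriv Λ t / (Λ t - a) ^ (m + 1)
      = h a * (∮ t in C(c, R), deriv Λ t / (Λ t - a) ^ (m + 1))
        + ∮ t in C(c, R), dslope h a (Λ t) * deriv Λ t / (Λ t - a) ^ m := by
  have hsplit : EqOn (fun t => h (Λ t) * deriv Λ t / (Λ t - a) ^ (m + 1))
      (fun t => h a * (deriv Λ t / (Λ t - a) ^ (m + 1))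
        + dslope h a (Λ t) * deriv Λ t / (Λ t - a) ^ m) (sphere c R) := fun t ht => by
    have hD : Λ t - a ≠ 0 := sub_ne_zero.2 (ha t ht)
    dsimp only
    rw [← sub_add_cancel (h (Λ t)) (h a), ← sub_smul_dslope h a (Λ t), smul_eq_mul]
    field_simp
    ring
  have hintegrable : ∀ n, ∀ g : ℂ → ℂ, AnalyticOnNhd ℂ g (Λ '' sphere c R) →
      CircleIntegrable (fun t => g (Λ t) * (deriv Λ t / (Λ t - a) ^ n)) c R := fun n g hg =>
    ContinuousOn.circleIntegrable hR fun t ht => by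
      have hgΛ := hg _ (mem_image_of_mem Λ ht)
      have hΛt := hΛ t ht
      have hD : (Λ t - a) ^ n ≠ 0 := pow_ne_zero _ (sub_ne_zero.2 (ha t ht))
      have : AnalyticAt ℂ (fun t => g (Λ t) * (deriv Λ t / (Λ t - a) ^ n)) t := by
        fun_prop (disch := exact hD)
      exact this.continuousAt.continuousWithinAt
  rw [circleIntegral.integral_congr hR hsplit, circleIntegral.integral_add,
    circleIntegral.integral_const_mul]
  · exact hintegrable (m + 1) (fun _ => h a) fun _ _ => analyticAt_const
  · simpa only [mul_div_assoc] using hintegrable m _ fun w hw => (hh w hw).dslope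

theorem circleIntegral_comp_mul_deriv_div_sub_pow (hr : 0 < r)
    (hΛ : AnalyticOnNhd ℂ Λ (closedBall ζ r)) (hinj : InjOn Λ (closedBall ζ r))
    (hΛ' : deriv Λ ζ ≠ 0) (k : ℕ) (hh : AnalyticOnNhd ℂ h (Λ '' closedBall ζ r)) :
    ∮ t in C(ζ, r), h (Λ t) * deriv Λ t / (Λ t - Λ ζ) ^ (k + 1)
      = 2 * π * I * (swap dslope (Λ ζ))^[k] h (Λ ζ) := by
  have hΛs := hΛ.mono sphere_subset_closedBall
  have hsphere : ∀ t ∈ sphere ζ r, Λ t ≠ Λ ζ := fun t ht =>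
    hinj.ne (sphere_subset_closedBall ht) (mem_closedBall_self hr.le) (ne_of_mem_sphere ht hr.ne')
  induction k generalizing h with
  | zero =>
    have hcauchy : ∮ t in C(ζ, r), dslope h (Λ ζ) (Λ t) * deriv Λ t = 0 := by
      have hd : DifferentiableOn ℂ (fun t => dslope h (Λ ζ) (Λ t) * deriv Λ t) (closedBall ζ r) :=
        fun t ht => ((((hh _ (mem_image_of_mem Λ ht)).dslope).comp (hΛ t ht)).mul
          (hΛ t ht).deriv).differentiableAt.differentiableWithinAt
      exact (hd.mono closure_ball_subset_closedBall).diffContOnCl.circleIntegral_eq_zero hr.le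
    rw [circleIntegral_comp_mul_deriv_div_sub_pow_succ hr.le hΛs hsphere
      (hh.mono (image_mono sphere_subset_closedBall)), zero_add]
    simp only [pow_one, pow_zero, div_one]
    rw [circleIntegral_deriv_div_sub_self hr hΛ hinj hΛ', hcauchy, iterate_zero_apply]
    ring
  | succ k ih =>
    rw [circleIntegral_comp_mul_deriv_div_sub_pow_succ hr.le hΛs hsphere
      (hh.mono (image_mono sphere_subset_closedBall)),
      circleIntegral_deriv_div_sub_pow_eq_zero hr.le (fun t ht => (hΛs t ht).differentiableAt)
        hsphere,
      ih fun w hw => (hh w hw).dslope, iterate_succ_apply]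
    ring

end ChangeOfVariable

/-- Cauchy-type formula for the `k`-th derivative after a conformal change of
variable: `(1/k!) h^{(k)}(Λ ζ) = (1/(2πi)) ∮_{|t−ζ|=r} h(Λ t) Λ'(t)/(Λ t − Λ ζ)^{k+1} dt`. -/
theorem deriv_cauchy_formula_conformal_change
    (ζ : ℂ) (r : ℝ) (hr : 0 < r) (Λ h : ℂ → ℂ) (k : ℕ)
    (hΛ : ∃ U : Set ℂ, IsOpen U ∧ closedBall ζ r ⊆ U ∧
      (∀ x ∈ U, AnalyticAt ℂ Λ x) ∧ Set.InjOn Λ U)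
    (hΛ' : deriv Λ ζ ≠ 0)
    (hh : ∃ V : Set ℂ, IsOpen V ∧ Λ '' closedBall ζ r ⊆ V ∧
      ∀ y ∈ V, AnalyticAt ℂ h y) :
    (1 / (k.factorial : ℂ)) * iteratedDeriv k h (Λ ζ)
      = (1 / (2 * Real.pi * Complex.I)) *
        ∮ t in C(ζ, r), h (Λ t) * deriv Λ t / (Λ t - Λ ζ) ^ (k + 1) := by
  obtain ⟨U, -, hUr, hΛU, hinj⟩ := hΛ
  obtain ⟨V, -, hVr, hhV⟩ := hh
  have hh' : AnalyticOnNhd ℂ h (Λ '' closedBall ζ r) := fun w hw => hhV w (hVr hw)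
  have hζ : Λ ζ ∈ Λ '' closedBall ζ r := mem_image_of_mem Λ (mem_closedBall_self hr.le)
  rw [circleIntegral_comp_mul_deriv_div_sub_pow hr (fun z hz => hΛU z (hUr hz)) (hinj.mono hUr) hΛ'
      k hh', iterate_dslope_self_eq_iteratedDeriv_div_factorial (hh' _ hζ) k]
  field_simp
end

section
/- Let ζ ∈ ℂ and let g be complex-analytic on a neighborhood of the closed disk of radius r > 0 centered at ζ, with g(ζ) = 0, g'(ζ) ≠ 0, and g and g' having no other zeros in that closed disk. Let h̃ be analytic on a neighborhood of the same closed disk and let k be a natural number. Then (1/(2πi)) ∮_{|t−ζ|=r} h̃(t) · g'(t)/g(t)^{k+1} dt = (1/k!) · ((D_g)^k h̃)(ζ), where D_g denotes the operator (D_g u)(t) = u'(t)/g'(t) and (D_g)^k is its k-fold iterate; equivalently, the residue at ζ of h̃(t) g'(t)/g(t)^{k+1} equals (1/k!)((D_g)^k h̃)(ζ). -/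
/-!
Write `I_n(u) = ∮ u g' / g^(n+1)`. Since `u' = (D_g u) g'` where `g' ≠ 0`,
`(u / g^(n+1))' = (D_g u) g' / g^(n+1) - (n+1) u g' / g^(n+2)`, and the integral of a derivative
around a closed circle vanishes; hence `I_n(D_g u) = (n+1) I_{n+1}(u)`, and induction on `k` reduces
the claim to `I_0(u) = 2πi u(ζ)`. For that, factor `g(t) = (t - ζ) G(t)` with `G = dslope g ζ`,
which is analytic and zero-free on the disk (`G(ζ) = g'(ζ)`), so `u g' / g = (t - ζ)⁻¹ (u g' / G)`
and Cauchy's integral formula gives `2πi u(ζ) g'(ζ) / G(ζ) = 2πi u(ζ)`.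
-/

open Complex Metric

open Real

variable {g u : ℂ → ℂ} {c : ℂ} {r : ℝ}

theorem analyticOnNhd_Dg {s : Set ℂ} (hg : AnalyticOnNhd ℂ g s) (hu : AnalyticOnNhd ℂ u s)
    (hg' : ∀ t ∈ s, deriv g t ≠ 0) : AnalyticOnNhd ℂ (Dg g u) s :=
  fun t ht => (hu.deriv t ht).div (hg.deriv t ht) (hg' t ht)

theorem circleIntegrable_mul_deriv_div_pow (hr : 0 ≤ r) (hu : ContinuousOn u (sphere c r))
    (hg : AnalyticOnNhd ℂ g (sphere c r)) (hg0 : ∀ t ∈ sphere c r, g t ≠ 0) (n : ℕ) :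
    CircleIntegrable (fun t => u t * deriv g t / g t ^ n) c r :=
  ((hu.mul hg.deriv.continuousOn).div (hg.continuousOn.pow n)
    fun t ht => pow_ne_zero n (hg0 t ht)).circleIntegrable hr

theorem hasDerivAt_div_pow {t : ℂ} (hu : DifferentiableAt ℂ u t) (hg : DifferentiableAt ℂ g t)
    (hg0 : g t ≠ 0) (hg'0 : deriv g t ≠ 0) (n : ℕ) :
    HasDerivAt (fun s => u s / g s ^ (n + 1))
      (Dg g u t * deriv g t / g t ^ (n + 1) - (n + 1) * (u t * deriv g t / g t ^ (n + 2))) t := by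
  refine (hu.hasDerivAt.fun_div (hg.hasDerivAt.pow (n + 1)) (pow_ne_zero _ hg0)).congr_deriv ?_
  simp only [Dg, Pi.pow_apply, Nat.add_sub_cancel]
  push_cast
  field_simp
  ring

theorem circleIntegral_Dg_mul_deriv_div_pow (hr : 0 ≤ r) (hg : AnalyticOnNhd ℂ g (sphere c r))
    (hu : AnalyticOnNhd ℂ u (sphere c r)) (hg0 : ∀ t ∈ sphere c r, g t ≠ 0)
    (hg'0 : ∀ t ∈ sphere c r, deriv g t ≠ 0) (n : ℕ) :
    (∮ t in C(c, r), Dg g u t * deriv g t / g t ^ (n + 1))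
      = (n + 1) * ∮ t in C(c, r), u t * deriv g t / g t ^ (n + 2) := by
  have hexact : (∮ t in C(c, r), (Dg g u t * deriv g t / g t ^ (n + 1)
      - (n + 1) * (u t * deriv g t / g t ^ (n + 2)))) = 0 :=
    circleIntegral.integral_eq_zero_of_hasDerivWithinAt hr fun t ht =>
      (hasDerivAt_div_pow (hu t ht).differentiableAt (hg t ht).differentiableAt (hg0 t ht)
        (hg'0 t ht) n).hasDerivWithinAt
  rwa [circleIntegral.integral_sub, circleIntegral.integral_const_mul, sub_eq_zero] at hexact
  · exact circleIntegrable_mul_deriv_div_pow hr (analyticOnNhd_Dg hg hu hg'0).continuousOn hg hg0 _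
  · exact (circleIntegrable_mul_deriv_div_pow hr hu.continuousOn hg hg0 _).const_mul _

theorem circleIntegral_mul_deriv_div (hr : 0 < r) (hg : AnalyticOnNhd ℂ g (closedBall c r))
    (hgc : g c = 0) (hg'c : deriv g c ≠ 0) (hgne : ∀ t ∈ closedBall c r, t ≠ c → g t ≠ 0)
    (hu : AnalyticOnNhd ℂ u (closedBall c r)) :
    (∮ t in C(c, r), u t * deriv g t / g t) = 2 * π * I * u c := by
  set G := dslope g c
  have hGc : G c = deriv g c := dslope_same g c
  have hfactor : ∀ t, g t = (t - c) * G t := fun t => by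
    simpa [hgc] using (sub_smul_dslope g c t).symm
  have hG0 : ∀ t ∈ closedBall c r, G t ≠ 0 := by
    intro t ht
    rcases eq_or_ne t c with rfl | htc
    · rwa [hGc]
    · exact right_ne_zero_of_mul (hfactor t ▸ hgne t ht htc)
  have hGd : DifferentiableOn ℂ G (closedBall c r) :=
    (differentiableOn_dslope (closedBall_mem_nhds c hr)).2 hg.differentiableOn
  have hF : DifferentiableOn ℂ (fun t => u t * deriv g t / G t) (closedBall c r) :=
    (hu.differentiableOn.mul hg.deriv.differentiableOn).div hGd hG0
  calc (∮ t in C(c, r), u t * deriv g t / g t)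
      = ∮ t in C(c, r), (t - c)⁻¹ • (u t * deriv g t / G t) :=
        circleIntegral.integral_congr hr.le fun t ht => by
          have : t - c ≠ 0 := sub_ne_zero.2 (ne_of_mem_sphere ht hr.ne')
          simp only [smul_eq_mul, hfactor t]
          field_simp
    _ = (2 * π * I : ℂ) • (u c * deriv g c / G c) :=
        hF.circleIntegral_sub_inv_smul (mem_ball_self hr)
    _ = 2 * π * I * u c := by
        rw [hGc, smul_eq_mul, mul_div_cancel_right₀ _ hg'c]

theorem circleIntegral_mul_deriv_div_pow_eq_iterate_Dg (hr : 0 < r)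
    (hg : AnalyticOnNhd ℂ g (closedBall c r)) (hgc : g c = 0)
    (hgne : ∀ t ∈ closedBall c r, t ≠ c → g t ≠ 0) (hg'ne : ∀ t ∈ closedBall c r, deriv g t ≠ 0)
    (k : ℕ) (hu : AnalyticOnNhd ℂ u (closedBall c r)) :
    (∮ t in C(c, r), u t * deriv g t / g t ^ (k + 1))
      = 2 * π * I / k.factorial * (Dg g)^[k] u c := by
  induction k generalizing u with
  | zero =>
    simpa using
      circleIntegral_mul_deriv_div hr hg hgc (hg'ne c (mem_closedBall_self hr.le)) hgne hu
  | succ k ih =>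
    have hstep := circleIntegral_Dg_mul_deriv_div_pow hr.le (hg.mono sphere_subset_closedBall)
      (hu.mono sphere_subset_closedBall)
      (fun t ht => hgne t (sphere_subset_closedBall ht) (ne_of_mem_sphere ht hr.ne'))
      (fun t ht => hg'ne t (sphere_subset_closedBall ht)) k
    rw [ih (analyticOnNhd_Dg hg hu hg'ne)] at hstep
    rw [Function.iterate_succ_apply, Nat.factorial_succ, Nat.cast_mul, Nat.cast_succ]
    have hk : (k + 1 : ℂ) ≠ 0 := Nat.cast_add_one_ne_zero k
    field_simp at hstep ⊢
    linear_combination -hstep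

theorem residue_formula_via_weighted_diff_general
    (ζ : ℂ) (r : ℝ) (hr : 0 < r) (g htilde : ℂ → ℂ) (k : ℕ)
    (hg : ∃ U : Set ℂ, IsOpen U ∧ closedBall ζ r ⊆ U ∧ ∀ x ∈ U, AnalyticAt ℂ g x)
    (hgζ : g ζ = 0)
    (hgne : ∀ t ∈ closedBall ζ r, t ≠ ζ → g t ≠ 0)
    (hg'ne : ∀ t ∈ closedBall ζ r, deriv g t ≠ 0)
    (hht : ∃ V : Set ℂ, IsOpen V ∧ closedBall ζ r ⊆ V ∧
      ∀ x ∈ V, AnalyticAt ℂ htilde x) :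
    (1 / (2 * Real.pi * Complex.I)) *
        (∮ t in C(ζ, r), htilde t * deriv g t / g t ^ (k + 1))
      = (1 / (k.factorial : ℂ)) * (Dg g)^[k] htilde ζ := by
  obtain ⟨U, -, hUb, hgU⟩ := hg
  obtain ⟨V, -, hVb, hhV⟩ := hht
  rw [circleIntegral_mul_deriv_div_pow_eq_iterate_Dg hr (fun x hx => hgU x (hUb hx)) hgζ hgne
    hg'ne k fun x hx => hhV x (hVb hx)]
  have h2πI : (2 * π * I : ℂ) ≠ 0 := by simp [pi_ne_zero, I_ne_zero]
  field_simp

/-- Residue computation: `(1/(2πi)) ∮_{|t−ζ|=r} h̃(t) g'(t)/g(t)^{k+1} dt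
= (1/k!) ((D_g)^k h̃)(ζ)`, when `g(ζ)=0`, `g'(ζ)≠0`, and `g`, `g'` have no other
zeros in the closed disk. -/
theorem residue_formula_via_weighted_diff
    (ζ : ℂ) (r : ℝ) (hr : 0 < r) (g htilde : ℂ → ℂ) (k : ℕ)
    (hg : ∃ U : Set ℂ, IsOpen U ∧ closedBall ζ r ⊆ U ∧ ∀ x ∈ U, AnalyticAt ℂ g x)
    (hgζ : g ζ = 0) (hg'ζ : deriv g ζ ≠ 0)
    (hgne : ∀ t ∈ closedBall ζ r, t ≠ ζ → g t ≠ 0)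
    (hg'ne : ∀ t ∈ closedBall ζ r, deriv g t ≠ 0)
    (hht : ∃ V : Set ℂ, IsOpen V ∧ closedBall ζ r ⊆ V ∧
      ∀ x ∈ V, AnalyticAt ℂ htilde x) :
    (1 / (2 * Real.pi * Complex.I)) *
        (∮ t in C(ζ, r), htilde t * deriv g t / g t ^ (k + 1))
      = (1 / (k.factorial : ℂ)) * (Dg g)^[k] htilde ζ :=
  residue_formula_via_weighted_diff_general ζ r hr g htilde k hg hgζ hgne hg'ne hht
end
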